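/- For real f with 0 < f < 1, the identity I₂(f)/(1+f) + I₂(−f)/(1−f) = (π/(2·agm(1+f,1−f)))² holds, where I₂ is Ausserlechner's double integral. -/

import Mathlib

open MeasureTheory Real Filter

/-- Ausserlechner's double integral `I₂(f)`. -/
noncomputable def I2 (f : ℝ) : ℝ :=
  (1 + f) * ∫ p in {p : ℝ × ℝ | 0 < p.2 ∧ p.2 < p.1 ∧ p.1 < π / 2},
    (Real.sqrt (((1 + f) ^ 2 - 4 * f * Real.cos p.1 ^ 2) *
      ((1 + f) ^ 2 - 4 * f * Real.sin p.2 ^ 2)))⁻¹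

/-- The AGM iteration: `agmPair a b n` is the pair `(aₙ, bₙ)` with
`aₙ₊₁ = (aₙ + bₙ)/2` and `bₙ₊₁ = √(aₙ bₙ)`. -/
noncomputable def agmPair (a b : ℝ) : ℕ → ℝ × ℝ
  | 0 => (a, b)
  | n + 1 => (((agmPair a b n).1 + (agmPair a b n).2) / 2,
      Real.sqrt ((agmPair a b n).1 * (agmPair a b n).2))

/-!
Since `sin² + cos² = 1`, the integrand of `I₂(±f)/(1 ± f)` factors as `K(b,a)(α) · K(a,b)(β)`
(resp. `K(a,b)(α) · K(b,a)(β)`), where `a = 1 + f`, `b = 1 - f` and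
`K(a,b)(θ) = (a² cos² θ + b² sin² θ)^(-1/2)`. The two triangle integrals are mirror images under
`α ↔ β`, so their sum is the integral of `K(b,a)(α) · K(a,b)(β)` over the whole square, i.e.
`(∫ K(b,a)) · (∫ K(a,b))`.

Each factor equals `π / (2 agm(a,b))` by Gauss's theorem. The substitution `t = b tan θ` turns
`∫₀^{π/2} K(a,b)` into the symmetric integral `J(a,b) = ∫₀^∞ dt / √((t² + a²)(t² + b²))`; the
substitution `u = (t - ab/t)/2`, which maps `(0, ∞)` onto `ℝ`, shows that `J` is invariant under
`(a, b) ↦ ((a + b)/2, √(ab))`; and `π/(2a) ≤ J(a,b) ≤ π/(2b)` for `b ≤ a` squeezes `J(a,b)` to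
`π / (2 agm(a, b))` along the AGM iteration.
-/

open Set

lemma inv_sq_add_sq_eq_mul {c : ℝ} (hc : c ≠ 0) (t : ℝ) :
    (t ^ 2 + c ^ 2)⁻¹ = (c ^ 2)⁻¹ * (1 + (c⁻¹ * t) ^ 2)⁻¹ := by
  field_simp
  ring

lemma integrable_inv_sq_add_sq {c : ℝ} (hc : 0 < c) :
    Integrable fun t : ℝ => (t ^ 2 + c ^ 2)⁻¹ := by
  simp_rw [inv_sq_add_sq_eq_mul hc.ne']
  exact (integrable_inv_one_add_sq.comp_mul_left' (inv_ne_zero hc.ne')).const_mul _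

lemma integral_Ioi_inv_sq_add_sq {c : ℝ} (hc : 0 < c) :
    ∫ t in Ioi 0, (t ^ 2 + c ^ 2)⁻¹ = π / (2 * c) := by
  simp_rw [inv_sq_add_sq_eq_mul hc.ne', integral_const_mul,
    integral_comp_mul_left_Ioi (fun x => (1 + x ^ 2)⁻¹) 0 (inv_pos.2 hc), mul_zero,
    integral_Ioi_inv_one_add_sq, arctan_zero, smul_eq_mul, inv_inv]
  field_simp
  ring

noncomputable def agmIntegrand (a b t : ℝ) : ℝ := (√((t ^ 2 + a ^ 2) * (t ^ 2 + b ^ 2)))⁻¹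

noncomputable def agmIntegral (a b : ℝ) : ℝ := ∫ t in Ioi 0, agmIntegrand a b t

lemma agmIntegral_comm (a b : ℝ) : agmIntegral a b = agmIntegral b a := by
  simp only [agmIntegral, agmIntegrand, mul_comm]

lemma agmIntegrand_mem_Icc {a b : ℝ} (hb : 0 < b) (hba : b ≤ a) (t : ℝ) :
    agmIntegrand a b t ∈ Icc (t ^ 2 + a ^ 2)⁻¹ (t ^ 2 + b ^ 2)⁻¹ := by
  have hle : t ^ 2 + b ^ 2 ≤ t ^ 2 + a ^ 2 := by gcongr
  have hpos : 0 < t ^ 2 + b ^ 2 := by positivity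
  constructor
  · refine inv_anti₀ (sqrt_pos.2 (mul_pos (hpos.trans_le hle) hpos)) ?_
    calc √((t ^ 2 + a ^ 2) * (t ^ 2 + b ^ 2))
        ≤ √((t ^ 2 + a ^ 2) * (t ^ 2 + a ^ 2)) := sqrt_le_sqrt (by gcongr)
      _ = t ^ 2 + a ^ 2 := sqrt_mul_self (by positivity)
  · refine inv_anti₀ hpos ?_
    calc t ^ 2 + b ^ 2 = √((t ^ 2 + b ^ 2) * (t ^ 2 + b ^ 2)) := (sqrt_mul_self hpos.le).symm
      _ ≤ √((t ^ 2 + a ^ 2) * (t ^ 2 + b ^ 2)) := sqrt_le_sqrt (by gcongr)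

lemma integrable_agmIntegrand {a b : ℝ} (hb : 0 < b) (hba : b ≤ a) :
    Integrable (agmIntegrand a b) := by
  refine (integrable_inv_sq_add_sq hb).mono' (by unfold agmIntegrand; fun_prop)
    (ae_of_all _ fun t => ?_)
  rw [Real.norm_of_nonneg (by unfold agmIntegrand; positivity)]
  exact (agmIntegrand_mem_Icc hb hba t).2

lemma agmIntegral_mem_Icc {a b : ℝ} (hb : 0 < b) (hba : b ≤ a) :
    agmIntegral a b ∈ Icc (π / (2 * a)) (π / (2 * b)) := by
  have hJ := (integrable_agmIntegrand hb hba).integrableOn (s := Ioi 0)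
  constructor
  · rw [← integral_Ioi_inv_sq_add_sq (hb.trans_le hba)]
    exact setIntegral_mono_on (integrable_inv_sq_add_sq (hb.trans_le hba)).integrableOn hJ
      measurableSet_Ioi fun t _ => (agmIntegrand_mem_Icc hb hba t).1
  · rw [← integral_Ioi_inv_sq_add_sq hb]
    exact setIntegral_mono_on hJ (integrable_inv_sq_add_sq hb).integrableOn
      measurableSet_Ioi fun t _ => (agmIntegrand_mem_Icc hb hba t).2

lemma integral_agmIntegrand (a b : ℝ) : ∫ t, agmIntegrand a b t = 2 * agmIntegral a b := by
  simpa only [agmIntegral, agmIntegrand, sq_abs] using integral_comp_abs (f := agmIntegrand a b)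

lemma image_half_sub_div_Ioi {c : ℝ} (hc : 0 < c) :
    (fun t => (t - c / t) / 2) '' Ioi 0 = univ := by
  refine eq_univ_of_forall fun u => ?_
  have hsq : √(u ^ 2 + c) ^ 2 = u ^ 2 + c := sq_sqrt (by positivity)
  have hlt : |u| < √(u ^ 2 + c) := by
    rw [← sqrt_sq_eq_abs]
    exact sqrt_lt_sqrt (sq_nonneg u) (by linarith)
  have ht : 0 < u + √(u ^ 2 + c) := by linarith [neg_abs_le u]
  refine ⟨u + √(u ^ 2 + c), ht, ?_⟩
  field_simp
  linear_combination hsq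

lemma strictMonoOn_half_sub_div {c : ℝ} (hc : 0 ≤ c) :
    StrictMonoOn (fun t => (t - c / t) / 2) (Ioi 0) := by
  intro s hs t _ hst
  have : c / t ≤ c / s := div_le_div_of_nonneg_left hc hs hst.le
  dsimp only
  linarith

lemma agmIntegrand_landen {a b t : ℝ} (ha : 0 < a) (hb : 0 < b) (ht : 0 < t) :
    (1 + a * b / t ^ 2) / 2 * agmIntegrand ((a + b) / 2) √(a * b) ((t - a * b / t) / 2)
      = 2 * agmIntegrand a b t := by
  have hrad : (((t - a * b / t) / 2) ^ 2 + ((a + b) / 2) ^ 2) * (((t - a * b / t) / 2) ^ 2 + a * b)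
      = (t ^ 2 + a ^ 2) * (t ^ 2 + b ^ 2) * ((t ^ 2 + a * b) / (4 * t ^ 2)) ^ 2 := by
    field_simp
    ring
  rw [agmIntegrand, agmIntegrand, sq_sqrt (by positivity), hrad, sqrt_mul (by positivity),
    sqrt_sq (by positivity)]
  have : 0 < √((t ^ 2 + a ^ 2) * (t ^ 2 + b ^ 2)) := sqrt_pos.2 (by positivity)
  field_simp
  ring

lemma agmIntegral_am_gm {a b : ℝ} (ha : 0 < a) (hb : 0 < b) :
    agmIntegral ((a + b) / 2) √(a * b) = agmIntegral a b := by
  have hderiv : ∀ t ∈ Ioi (0 : ℝ), HasDerivWithinAt (fun t => (t - a * b / t) / 2)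
      ((1 + a * b / t ^ 2) / 2) (Ioi 0) t := fun t ht =>
    (((hasDerivAt_id t).sub ((hasDerivAt_inv (ne_of_gt ht)).const_mul (a * b))).div_const 2
      |>.hasDerivWithinAt.congr_deriv (by simp [div_eq_mul_inv]))
  have hsubst : ∫ u, agmIntegrand ((a + b) / 2) √(a * b) u = 2 * agmIntegral a b := by
    rw [← setIntegral_univ, ← image_half_sub_div_Ioi (by positivity : 0 < a * b),
      integral_image_eq_integral_abs_deriv_smul measurableSet_Ioi hderiv
        (strictMonoOn_half_sub_div (by positivity)).injOn,
      agmIntegral, ← integral_const_mul]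
    refine setIntegral_congr_fun measurableSet_Ioi fun t (ht : 0 < t) => ?_
    rw [abs_of_pos (by positivity), smul_eq_mul, agmIntegrand_landen ha hb ht]
  linarith [integral_agmIntegrand ((a + b) / 2) √(a * b)]

noncomputable def gaussIntegrand (a b θ : ℝ) : ℝ := (√(a ^ 2 * cos θ ^ 2 + b ^ 2 * sin θ ^ 2))⁻¹

lemma gaussIntegrand_radicand_pos {a b : ℝ} (ha : a ≠ 0) (hb : b ≠ 0) (θ : ℝ) :
    0 < a ^ 2 * cos θ ^ 2 + b ^ 2 * sin θ ^ 2 := by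
  rcases eq_or_ne (cos θ) 0 with hc | hc
  · have hs := sin_sq_add_cos_sq θ
    rw [hc, zero_pow two_ne_zero, add_zero] at hs
    rw [hc, hs]
    positivity
  · exact add_pos_of_pos_of_nonneg (by positivity) (by positivity)

lemma continuous_gaussIntegrand {a b : ℝ} (ha : a ≠ 0) (hb : b ≠ 0) :
    Continuous (gaussIntegrand a b) :=
  (continuous_sqrt.comp (by fun_prop)).inv₀ fun θ =>
    (sqrt_pos.2 (gaussIntegrand_radicand_pos ha hb θ)).ne'

lemma integrableOn_gaussIntegrand {a b : ℝ} (ha : a ≠ 0) (hb : b ≠ 0) (c d : ℝ) :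
    IntegrableOn (gaussIntegrand a b) (Ioo c d) :=
  (continuous_gaussIntegrand ha hb).integrableOn_Icc.mono_set Ioo_subset_Icc_self

lemma image_const_mul_tan_Ioo {b : ℝ} (hb : 0 < b) :
    (fun θ => b * tan θ) '' Ioo 0 (π / 2) = Ioi 0 := by
  ext t
  constructor
  · rintro ⟨θ, hθ, rfl⟩
    exact mul_pos hb (tan_pos_of_pos_of_lt_pi_div_two hθ.1 hθ.2)
  · intro (ht : 0 < t)
    refine ⟨arctan (t / b), ⟨?_, arctan_lt_pi_div_two _⟩, ?_⟩
    · simpa [arctan_zero] using arctan_strictMono (div_pos ht hb)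
    · simp only [tan_arctan]
      field_simp

lemma agmIntegral_eq_integral_gaussIntegrand {a b : ℝ} (ha : 0 < a) (hb : 0 < b) :
    agmIntegral a b = ∫ θ in Ioo 0 (π / 2), gaussIntegrand a b θ := by
  have hIoo : Ioo 0 (π / 2) ⊆ Ioo (-(π / 2)) (π / 2) :=
    Ioo_subset_Ioo_left (by linarith [pi_pos])
  have hcos : ∀ θ ∈ Ioo 0 (π / 2), 0 < cos θ := fun θ hθ => cos_pos_of_mem_Ioo (hIoo hθ)
  have hderiv : ∀ θ ∈ Ioo 0 (π / 2),
      HasDerivWithinAt (fun θ => b * tan θ) (b / cos θ ^ 2) (Ioo 0 (π / 2)) θ := fun θ hθ =>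
    ((hasDerivAt_tan (hcos θ hθ).ne').const_mul b).hasDerivWithinAt.congr_deriv (by ring)
  have hinj : InjOn (fun θ => b * tan θ) (Ioo 0 (π / 2)) := fun x hx y hy h =>
    injOn_tan (hIoo hx) (hIoo hy) (mul_left_cancel₀ hb.ne' h)
  rw [agmIntegral, ← image_const_mul_tan_Ioo hb,
    integral_image_eq_integral_abs_deriv_smul measurableSet_Ioo hderiv hinj]
  refine setIntegral_congr_fun measurableSet_Ioo fun θ hθ => ?_
  have hc := hcos θ hθ
  have hrad : ((b * tan θ) ^ 2 + a ^ 2) * ((b * tan θ) ^ 2 + b ^ 2)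
      = (a ^ 2 * cos θ ^ 2 + b ^ 2 * sin θ ^ 2) * (b / cos θ ^ 2) ^ 2 := by
    rw [tan_eq_sin_div_cos]
    field_simp
    rw [sin_sq_add_cos_sq]
    ring
  have : 0 < √(a ^ 2 * cos θ ^ 2 + b ^ 2 * sin θ ^ 2) := sqrt_pos.2 (by positivity)
  rw [agmIntegrand, gaussIntegrand, hrad, sqrt_mul (by positivity), sqrt_sq (by positivity),
    abs_of_pos (by positivity), smul_eq_mul]
  field_simp

lemma sqrt_mul_le_add_div_two {x y : ℝ} (hx : 0 ≤ x) (hy : 0 ≤ y) : √(x * y) ≤ (x + y) / 2 :=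
  sqrt_le_iff.2 ⟨by positivity, by nlinarith [sq_nonneg (x - y)]⟩

lemma agmPair_snd_mem_Icc {a b : ℝ} (hb : 0 < b) (hba : b ≤ a) (n : ℕ) :
    (agmPair a b n).2 ∈ Icc b (agmPair a b n).1 := by
  induction n with
  | zero => exact ⟨le_rfl, hba⟩
  | succ n ih =>
    obtain ⟨hbn, hban⟩ := ih
    have hbn0 : 0 ≤ (agmPair a b n).2 := hb.le.trans hbn
    refine ⟨hbn.trans ?_, sqrt_mul_le_add_div_two (hbn0.trans hban) hbn0⟩
    calc (agmPair a b n).2 = √((agmPair a b n).2 * (agmPair a b n).2) := (sqrt_mul_self hbn0).symm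
      _ ≤ √((agmPair a b n).1 * (agmPair a b n).2) := sqrt_le_sqrt (by gcongr)

lemma agmIntegral_agmPair {a b : ℝ} (hb : 0 < b) (hba : b ≤ a) (n : ℕ) :
    agmIntegral (agmPair a b n).1 (agmPair a b n).2 = agmIntegral a b := by
  induction n with
  | zero => rfl
  | succ n ih =>
    obtain ⟨hbn, hban⟩ := agmPair_snd_mem_Icc hb hba n
    exact (agmIntegral_am_gm (hb.trans_le (hbn.trans hban)) (hb.trans_le hbn)).trans ih

theorem agmIntegral_eq_pi_div_of_tendsto {a b L : ℝ} (hb : 0 < b) (hba : b ≤ a)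
    (hA : Tendsto (fun n => (agmPair a b n).1) atTop (nhds L))
    (hB : Tendsto (fun n => (agmPair a b n).2) atTop (nhds L)) :
    agmIntegral a b = π / (2 * L) := by
  have hL : 0 < L := hb.trans_le (ge_of_tendsto' hB fun n => (agmPair_snd_mem_Icc hb hba n).1)
  have hbounds (n : ℕ) : agmIntegral a b ∈
      Icc (π / (2 * (agmPair a b n).1)) (π / (2 * (agmPair a b n).2)) := by
    obtain ⟨hbn, hban⟩ := agmPair_snd_mem_Icc hb hba n
    rw [← agmIntegral_agmPair hb hba n]
    exact agmIntegral_mem_Icc (hb.trans_le hbn) hban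
  have hlim {u : ℕ → ℝ} (hu : Tendsto u atTop (nhds L)) :
      Tendsto (fun n => π / (2 * u n)) atTop (nhds (π / (2 * L))) :=
    tendsto_const_nhds.div (hu.const_mul 2) (by positivity)
  exact le_antisymm (ge_of_tendsto' (hlim hB) fun n => (hbounds n).2)
    (le_of_tendsto' (hlim hA) fun n => (hbounds n).1)

lemma volume_setOf_fst_eq_snd : volume {p : ℝ × ℝ | p.1 = p.2} = 0 := by
  rw [Measure.volume_eq_prod,
    Measure.measure_prod_null (measurableSet_eq_fun measurable_fst measurable_snd)]
  refine Eventually.of_forall fun x => ?_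
  simp [preimage]

lemma setIntegral_triangle_add_swap_eq_mul {g h : ℝ → ℝ} {c d : ℝ}
    (hg : IntegrableOn g (Ioo c d)) (hh : IntegrableOn h (Ioo c d)) :
    (∫ p in {p : ℝ × ℝ | c < p.2 ∧ p.2 < p.1 ∧ p.1 < d}, g p.1 * h p.2) +
      ∫ p in {p : ℝ × ℝ | c < p.2 ∧ p.2 < p.1 ∧ p.1 < d}, h p.1 * g p.2 =
      (∫ x in Ioo c d, g x) * ∫ x in Ioo c d, h x := by
  set T := {p : ℝ × ℝ | c < p.2 ∧ p.2 < p.1 ∧ p.1 < d}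
  set T' := {p : ℝ × ℝ | c < p.1 ∧ p.1 < p.2 ∧ p.2 < d}
  set S := Ioo c d ×ˢ Ioo c d
  have hT'meas : MeasurableSet T' := by
    simp only [T', ofPred_and]
    exact (measurableSet_lt measurable_const measurable_fst).inter
      ((measurableSet_lt measurable_fst measurable_snd).inter
        (measurableSet_lt measurable_snd measurable_const))
  have hTS : T ⊆ S := fun p ⟨h1, h2, h3⟩ => ⟨⟨h1.trans h2, h3⟩, h1, h2.trans h3⟩
  have hT'S : T' ⊆ S := fun p ⟨h1, h2, h3⟩ => ⟨⟨h1, h2.trans h3⟩, h1.trans h2, h3⟩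
  have hF : IntegrableOn (fun p : ℝ × ℝ => g p.1 * h p.2) S := by
    rw [IntegrableOn, Measure.volume_eq_prod, ← Measure.prod_restrict]
    exact hg.mul_prod hh
  have hswap : ∫ p in T, h p.1 * g p.2 = ∫ p in T', g p.1 * h p.2 := by
    have hpre : Prod.swap ⁻¹' T' = T := by
      ext p
      simp only [T, T', mem_preimage, mem_ofPred_eq, Prod.fst_swap, Prod.snd_swap]
    have hmp : MeasurePreserving (Prod.swap : ℝ × ℝ → ℝ × ℝ) volume volume :=
      Measure.measurePreserving_swap
    rw [← hmp.setIntegral_preimage_emb MeasurableEquiv.prodComm.measurableEmbedding _ T', hpre]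
    simp only [Prod.fst_swap, Prod.snd_swap, mul_comm]
  have hae : (T ∪ T' : Set (ℝ × ℝ)) =ᵐ[volume] S := by
    refine ae_eq_set.2 ⟨by rw [sdiff_eq_empty.2 (union_subset hTS hT'S), measure_empty],
      measure_mono_null ?_ volume_setOf_fst_eq_snd⟩
    rintro p ⟨⟨⟨h1, h2⟩, h3, h4⟩, hp⟩
    by_contra hne
    rcases lt_or_gt_of_ne hne with hlt | hgt
    · exact hp (Or.inr ⟨h1, hlt, h4⟩)
    · exact hp (Or.inl ⟨h3, hgt, h2⟩)
  have hdisj : Disjoint T T' := disjoint_left.2 fun p hp hp' => lt_asymm hp.2.1 hp'.2.1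
  rw [hswap, ← setIntegral_union hdisj hT'meas (hF.mono_set hTS) (hF.mono_set hT'S),
    setIntegral_congr_set hae, Measure.volume_eq_prod, setIntegral_prod_mul]

lemma I2_div_eq_setIntegral {u : ℝ} (hu : 1 + u ≠ 0) :
    I2 u / (1 + u) = ∫ p in {p : ℝ × ℝ | 0 < p.2 ∧ p.2 < p.1 ∧ p.1 < π / 2},
      gaussIntegrand (1 - u) (1 + u) p.1 * gaussIntegrand (1 + u) (1 - u) p.2 := by
  rw [I2, mul_div_cancel_left₀ _ hu]
  congr 1 with p
  have hcos : (1 + u) ^ 2 - 4 * u * cos p.1 ^ 2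
      = (1 - u) ^ 2 * cos p.1 ^ 2 + (1 + u) ^ 2 * sin p.1 ^ 2 := by
    linear_combination (-(1 + u) ^ 2) * sin_sq_add_cos_sq p.1
  have hsin : (1 + u) ^ 2 - 4 * u * sin p.2 ^ 2
      = (1 + u) ^ 2 * cos p.2 ^ 2 + (1 - u) ^ 2 * sin p.2 ^ 2 := by
    linear_combination (-(1 + u) ^ 2) * sin_sq_add_cos_sq p.2
  rw [hcos, hsin, sqrt_mul (by positivity), mul_inv, gaussIntegrand, gaussIntegrand]

theorem stmt17 (f : ℝ) (hf : f ∈ Set.Ioo (0:ℝ) 1) (L : ℝ)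
    (hA : Tendsto (fun n => (agmPair (1 + f) (1 - f) n).1) atTop (nhds L))
    (hB : Tendsto (fun n => (agmPair (1 + f) (1 - f) n).2) atTop (nhds L)) :
    I2 f / (1 + f) + I2 (-f) / (1 - f) = (π / (2 * L)) ^ 2 := by
  obtain ⟨hf0, hf1⟩ := hf
  have ha : 0 < 1 + f := by linarith
  have hb : 0 < 1 - f := by linarith
  have hgauss : agmIntegral (1 + f) (1 - f) = π / (2 * L) :=
    agmIntegral_eq_pi_div_of_tendsto hb (by linarith) hA hB
  have hneg := I2_div_eq_setIntegral (u := -f) (by linarith)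
  rw [sub_neg_eq_add, ← sub_eq_add_neg] at hneg
  rw [I2_div_eq_setIntegral ha.ne', hneg,
    setIntegral_triangle_add_swap_eq_mul (integrableOn_gaussIntegrand hb.ne' ha.ne' _ _)
      (integrableOn_gaussIntegrand ha.ne' hb.ne' _ _),
    ← agmIntegral_eq_integral_gaussIntegrand hb ha,
    ← agmIntegral_eq_integral_gaussIntegrand ha hb,
    agmIntegral_comm, hgauss, sq]
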